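/- arXiv:1905.07404 — 5 statements merged into one kernel-verified Lean document; each statement's English description precedes it below -/
import Mathlib

section
/- Let A = [a_{ij}] ∈ SO_3(ℝ) and let i, j, k be distinct indices in {1,2,3}. Then (1 + a_{ii})(a_{jk} + a_{kj}) = a_{ij} a_{ki} + a_{ji} a_{ik}. -/
open Matrix

theorem SO3_identity_one (A : Matrix (Fin 3) (Fin 3) ℝ)
    (horth : Aᵀ * A = 1) (hdet : A.det = 1)
    (i j k : Fin 3) (hij : i ≠ j) (hik : i ≠ k) (hjk : j ≠ k) :
    (1 + A i i) * (A j k + A k j) = A i j * A k i + A j i * A i k := by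
  have h1 : A * adjugate A = 1 := by rw [Matrix.mul_adjugate, hdet, one_smul]
  have hadj : adjugate A = Aᵀ := by
    calc adjugate A = (Aᵀ * A) * adjugate A := by rw [horth, one_mul]
      _ = Aᵀ * (A * adjugate A) := by rw [Matrix.mul_assoc]
      _ = Aᵀ := by rw [h1, mul_one]
  have key : ∀ p q r : Fin 3, p ≠ q → p ≠ r → q ≠ r →
      A q r = A p q * A r p - A p p * A r q := by
    intro p q r hpq hpr hqr
    have h := congrFun (congrFun hadj r) q
    fin_cases p <;> fin_cases q <;> fin_cases r <;>
      simp_all [Matrix.adjugate_fin_three] <;> linarith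
  linear_combination key i j k hij hik hjk + key i k j hik hij (Ne.symm hjk)
end

section
/- Let A = [a_{ij}] ∈ SO_3(ℝ) and let i, j, k be distinct indices in {1,2,3}. Then (a_{ij}² + a_{ik}²)(a_{ij} a_{ik} + a_{ji} a_{ki}) = (a_{ij} a_{ki} + a_{ji} a_{ik})(a_{ij} a_{ji} + a_{ik} a_{ki}). -/
open Matrix

theorem SO3_identity_three (A : Matrix (Fin 3) (Fin 3) ℝ)
    (horth : Aᵀ * A = 1) (hdet : A.det = 1)
    (i j k : Fin 3) (hij : i ≠ j) (hik : i ≠ k) (hjk : j ≠ k) :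
    (A i j ^ 2 + A i k ^ 2) * (A i j * A i k + A j i * A k i) =
      (A i j * A k i + A j i * A i k) * (A i j * A j i + A i k * A k i) := by
  have hAAT : A * Aᵀ = 1 := mul_eq_one_comm.mp horth
  have huniv : ({i, j, k} : Finset (Fin 3)) = Finset.univ := by
    apply Finset.eq_of_subset_of_card_le (Finset.subset_univ _)
    have : ({i, j, k} : Finset (Fin 3)).card = 3 := by
      rw [Finset.card_insert_of_notMem (by simp [hij, hik]),
        Finset.card_insert_of_notMem (by simp [hjk]), Finset.card_singleton]
    simp [this]
  have hr := congrFun (congrFun hAAT i) i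
  have hc := congrFun (congrFun horth i) i
  rw [Matrix.mul_apply, ← huniv] at hr hc
  rw [Finset.sum_insert (by simp [hij, hik]), Finset.sum_insert (by simp [hjk]),
    Finset.sum_singleton] at hr hc
  simp only [Matrix.transpose_apply, Matrix.one_apply_eq] at hr hc
  linear_combination (A i j * A i k) * hr - (A i j * A i k) * hc
end

section
/- Let A = [a_{ij}] ∈ SO_3(ℝ). If a_{23} + a_{32}, a_{13} + a_{31}, and a_{12} + a_{21} are all nonzero, then the vector V = (1/(a_{23}+a_{32}), 1/(a_{13}+a_{31}), 1/(a_{12}+a_{21})) satisfies AV = V. -/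
/-! The columns of `M = adj (A - 1)` are fixed by `A`, since `(A - 1) M = det (A - 1) • 1` and
`det (A - 1) = det A * det (1 - Aᵀ) = -det (A - 1)` for a rotation in odd dimension. Moreover
`adj M = det (A - 1) • (A - 1) = 0`, so all `2 × 2` minors of `M` vanish, and off the diagonal
`M` agrees with `A + Aᵀ` because `adj A = Aᵀ`. One vanishing minor says exactly that `V` is a
multiple of the first column of `M`. -/

namespace Matrix

variable {n R : Type*} [Fintype n] [DecidableEq n] [CommRing R]

theorem adjugate_eq_transpose_of_transpose_mul_self_eq_one {A : Matrix n n R}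
    (horth : Aᵀ * A = 1) (hdet : A.det = 1) : adjugate A = Aᵀ := by
  refine right_inv_eq_right_inv ?_ (mul_eq_one_comm.mp horth)
  rw [mul_adjugate, hdet, one_smul]

theorem det_sub_one_eq_zero_of_transpose_mul_self_eq_one [IsAddTorsionFree R]
    (hn : Odd (Fintype.card n)) {A : Matrix n n R} (horth : Aᵀ * A = 1) (hdet : A.det = 1) :
    (A - 1).det = 0 := by
  refine self_eq_neg.mp ?_
  calc (A - 1).det = (A * (1 - Aᵀ)).det := by rw [mul_sub, mul_eq_one_comm.mp horth, mul_one]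
    _ = (-(A - 1)).det := by
      rw [det_mul, hdet, one_mul, ← det_transpose, transpose_sub, transpose_one,
        transpose_transpose, neg_sub]
    _ = -(A - 1).det := by rw [det_neg, hn.neg_one_pow, neg_one_mul]

theorem adjugate_adjugate_eq_zero {B : Matrix n n R} (hn : 2 < Fintype.card n) (hB : B.det = 0) :
    adjugate (adjugate B) = 0 := by
  rw [adjugate_adjugate B (by omega), hB, zero_pow (by omega), zero_smul]

theorem mul_adjugate_sub_one_eq_self [IsAddTorsionFree R] (hn : Odd (Fintype.card n))
    {A : Matrix n n R} (horth : Aᵀ * A = 1) (hdet : A.det = 1) :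
    A * adjugate (A - 1) = adjugate (A - 1) := by
  have := mul_adjugate (A - 1)
  rwa [det_sub_one_eq_zero_of_transpose_mul_self_eq_one hn horth hdet, zero_smul, sub_mul, one_mul,
    sub_eq_zero] at this

theorem adjugate_sub_one_fin_three (A : Matrix (Fin 3) (Fin 3) R) :
    adjugate (A - 1) = adjugate A + A - (trace A - 1) • 1 := by
  ext i j
  fin_cases i <;> fin_cases j <;> simp [adjugate_fin_three, trace_fin_three] <;> ring

theorem adjugate_sub_one_apply_of_ne {A : Matrix (Fin 3) (Fin 3) R} (horth : Aᵀ * A = 1)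
    (hdet : A.det = 1) {i j : Fin 3} (hij : i ≠ j) :
    adjugate (A - 1) i j = A i j + A j i := by
  rw [adjugate_sub_one_fin_three, adjugate_eq_transpose_of_transpose_mul_self_eq_one horth hdet]
  simp [one_apply_ne hij, add_comm]

end Matrix

open Matrix

theorem SO3_reciprocal_eigenvector_general (A : Matrix (Fin 3) (Fin 3) ℝ)
    (horth : Aᵀ * A = 1) (hdet : A.det = 1)
    (h2 : A 0 2 + A 2 0 ≠ 0) (h3 : A 0 1 + A 1 0 ≠ 0) :
    A.mulVec ![(A 1 2 + A 2 1)⁻¹, (A 0 2 + A 2 0)⁻¹, (A 0 1 + A 1 0)⁻¹] =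
      ![(A 1 2 + A 2 1)⁻¹, (A 0 2 + A 2 0)⁻¹, (A 0 1 + A 1 0)⁻¹] := by
  have hoff {i j : Fin 3} (hij : i ≠ j) : adjugate (A - 1) i j = A i j + A j i :=
    adjugate_sub_one_apply_of_ne horth hdet hij
  have hminor : adjugate (A - 1) 0 0 * (A 1 2 + A 2 1) = (A 0 1 + A 1 0) * (A 0 2 + A 2 0) := by
    have hsing := det_sub_one_eq_zero_of_transpose_mul_self_eq_one (by decide) horth hdet
    have := congrArg (· 1 2) (adjugate_adjugate_eq_zero (by decide) hsing)
    simp only [adjugate_fin_three (adjugate _), of_apply, cons_val', cons_val, cons_val_fin_one,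
      cons_val_one, cons_val_zero, Matrix.zero_apply] at this
    rw [hoff (i := 1) (j := 2) (by decide), hoff (i := 0) (j := 2) (by decide),
      hoff (i := 1) (j := 0) (by decide)] at this
    linear_combination -this
  have hcol : ![(A 1 2 + A 2 1)⁻¹, (A 0 2 + A 2 0)⁻¹, (A 0 1 + A 1 0)⁻¹] =
      adjugate (A - 1) *ᵥ ![((A 0 1 + A 1 0) * (A 0 2 + A 2 0))⁻¹, 0, 0] := by
    ext i
    fin_cases i <;> simp only [Fin.zero_eta, Fin.mk_one, Fin.reduceFinMk, mulVec, dotProduct,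
      Fin.sum_univ_three, cons_val, cons_val_zero, cons_val_one, mul_zero, add_zero, ne_eq,
      Fin.reduceEq, not_false_eq_true, hoff]
    · refine (eq_inv_of_mul_eq_one_left ?_).symm
      rw [mul_right_comm, hminor]
      field_simp
    · rw [add_comm (A 1 0)]
      field_simp
    · rw [add_comm (A 2 0)]
      field_simp
  rw [hcol, mulVec_mulVec, mul_adjugate_sub_one_eq_self (by decide) horth hdet]

theorem SO3_reciprocal_eigenvector (A : Matrix (Fin 3) (Fin 3) ℝ)
    (horth : Aᵀ * A = 1) (hdet : A.det = 1)
    (h1 : A 1 2 + A 2 1 ≠ 0) (h2 : A 0 2 + A 2 0 ≠ 0) (h3 : A 0 1 + A 1 0 ≠ 0) :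
    A.mulVec ![(A 1 2 + A 2 1)⁻¹, (A 0 2 + A 2 0)⁻¹, (A 0 1 + A 1 0)⁻¹] =
      ![(A 1 2 + A 2 1)⁻¹, (A 0 2 + A 2 0)⁻¹, (A 0 1 + A 1 0)⁻¹] :=
  SO3_reciprocal_eigenvector_general A horth hdet h2 h3
end

section
/- Let A be an n×n real orthogonal matrix with exactly one real eigenvalue λ, which is simple. If (A - Aᵀ)U = 0, then AU = λU. -/
open Matrix

lemma root_of_eig {n : ℕ} (A : Matrix (Fin n) (Fin n) ℝ) (μ : ℝ) (V : Fin n → ℝ)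
    (hV : V ≠ 0) (h : A.mulVec V = μ • V) : A.charpoly.IsRoot μ := by
  have hdet : (μ • (1 : Matrix (Fin n) (Fin n) ℝ) - A).det = 0 := by
    rw [← Matrix.exists_mulVec_eq_zero_iff]
    refine ⟨V, hV, ?_⟩
    simp [sub_mulVec, Matrix.smul_mulVec, h]
  have heval : A.charpoly.eval μ = (μ • (1 : Matrix (Fin n) (Fin n) ℝ) - A).det := by
    rw [Matrix.charpoly, ← Polynomial.coe_evalRingHom, RingHom.map_det]
    congr 1
    ext i j
    by_cases hij : i = j <;>
      simp [charmatrix_apply_eq, charmatrix_apply_ne, hij, Matrix.one_apply,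
        Matrix.smul_apply, Matrix.sub_apply]
  simpa [Polynomial.IsRoot, heval] using hdet

theorem unique_real_eigenvalue_eigenvector {n : ℕ} (A : Matrix (Fin n) (Fin n) ℝ)
    (horth : Aᵀ * A = 1) (lam : ℝ)
    (heig : A.charpoly.IsRoot lam)
    (huniq : ∀ μ : ℝ, A.charpoly.IsRoot μ → μ = lam)
    (hsimple : A.charpoly.rootMultiplicity lam = 1)
    (U : Fin n → ℝ) (hU : (A - Aᵀ).mulVec U = 0) :
    A.mulVec U = lam • U := by
  by_cases hU0 : U = 0
  · simp [hU0]
  have hAAT : A * Aᵀ = 1 := mul_eq_one_comm.mp horth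
  have hAU : A.mulVec U = Aᵀ.mulVec U := by
    have := hU
    rw [sub_mulVec, sub_eq_zero] at this
    exact this
  have hA2 : A.mulVec (A.mulVec U) = U := by
    rw [hAU, Matrix.mulVec_mulVec, hAAT, Matrix.one_mulVec]
  set U₁ := U + A.mulVec U with hU₁def
  set U₂ := U - A.mulVec U with hU₂def
  have hAU₁ : A.mulVec U₁ = (1 : ℝ) • U₁ := by
    rw [hU₁def, Matrix.mulVec_add, hA2, one_smul, add_comm]
  have hAU₂ : A.mulVec U₂ = (-1 : ℝ) • U₂ := by
    rw [hU₂def, Matrix.mulVec_sub, hA2, neg_one_smul, neg_sub]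
  by_cases h2 : U₂ = 0
  · -- A.mulVec U = U, so U₁ = 2U ≠ 0, eigenvalue 1
    have hAUU : A.mulVec U = U := by
      have := h2
      rw [hU₂def, sub_eq_zero] at this
      exact this.symm
    have hU₁ne : U₁ ≠ 0 := by
      rw [hU₁def, hAUU]
      intro hc
      apply hU0
      have : (2 : ℝ) • U = 0 := by rw [two_smul]; exact hc
      simpa using this
    have h1 : (1 : ℝ) = lam := huniq 1 (root_of_eig A 1 U₁ hU₁ne hAU₁)
    rw [hAUU, ← h1, one_smul]
  · have hneg : (-1 : ℝ) = lam := huniq (-1) (root_of_eig A (-1) U₂ h2 hAU₂)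
    have h1 : U₁ = 0 := by
      by_contra h1ne
      have hpos : (1 : ℝ) = lam := huniq 1 (root_of_eig A 1 U₁ h1ne hAU₁)
      rw [← hpos] at hneg
      norm_num at hneg
    have hAUU : A.mulVec U = -U := eq_neg_of_add_eq_zero_left (by rw [hU₁def] at h1; linear_combination (norm := module) h1)
    rw [hAUU, ← hneg, neg_one_smul]
end

section
/- Let A = [a_{ij}] ∈ SO_3(ℝ) and suppose all denominators a_{23}+a_{32}, a_{13}+a_{31}, a_{12}+a_{21} are nonzero. With c = a_{23}² - a_{32}², the vector c·(1/(a_{23}+a_{32}), 1/(a_{13}+a_{31}), 1/(a_{12}+a_{21})) equals (a_{23}-a_{32}, a_{31}-a_{13}, a_{12}-a_{21}). -/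
open Matrix

theorem SO3_cV_eq_U (A : Matrix (Fin 3) (Fin 3) ℝ)
    (horth : Aᵀ * A = 1) (hdet : A.det = 1)
    (h1 : A 1 2 + A 2 1 ≠ 0) (h2 : A 0 2 + A 2 0 ≠ 0) (h3 : A 0 1 + A 1 0 ≠ 0) :
    (A 1 2 ^ 2 - A 2 1 ^ 2) •
        ![(A 1 2 + A 2 1)⁻¹, (A 0 2 + A 2 0)⁻¹, (A 0 1 + A 1 0)⁻¹] =
      ![A 1 2 - A 2 1, A 2 0 - A 0 2, A 0 1 - A 1 0] := by
  have hAA : A * Aᵀ = 1 := mul_eq_one_comm.mp horth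
  have c1 := congrFun (congrFun horth 1) 1
  have c2 := congrFun (congrFun horth 2) 2
  have r1 := congrFun (congrFun hAA 1) 1
  have r2 := congrFun (congrFun hAA 2) 2
  simp only [Matrix.mul_apply, Fin.sum_univ_three, Matrix.one_apply_eq,
    Matrix.transpose_apply] at c1 c2 r1 r2
  have k1 : A 1 2 ^ 2 - A 2 1 ^ 2 = A 2 0 ^ 2 - A 0 2 ^ 2 := by
    linear_combination c2 - r2
  have k2 : A 1 2 ^ 2 - A 2 1 ^ 2 = A 0 1 ^ 2 - A 1 0 ^ 2 := by
    linear_combination r1 - c1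
  funext i
  fin_cases i
  · show (A 1 2 ^ 2 - A 2 1 ^ 2) * (A 1 2 + A 2 1)⁻¹ = A 1 2 - A 2 1
    field_simp
    ring
  · show (A 1 2 ^ 2 - A 2 1 ^ 2) * (A 0 2 + A 2 0)⁻¹ = A 2 0 - A 0 2
    rw [k1]; field_simp; ring
  · show (A 1 2 ^ 2 - A 2 1 ^ 2) * (A 0 1 + A 1 0)⁻¹ = A 0 1 - A 1 0
    rw [k2]; field_simp; ring
end
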